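/- Let A be a nonzero matrix over a field 𝕜 indexed by (Fin m × Fin m) rows and (Fin n × Fin n) columns, and suppose A = B ⊗ B for some m×n matrix B. Then the block vec matrix vec^{(m×n)}(A) is symmetric (equal to its transpose) and has rank 1. -/

import Mathlib

/-! `blockVec` turns a Kronecker product into the outer product of the row-major
vectorizations of its factors, so `B ⊗ₖ B` becomes the symmetric rank-one `vec Bᵀ (vec Bᵀ)ᵀ`. -/

open Matrix Kronecker

/-- The block vec matrix of an `mp × nq` matrix `A`, viewed as an `m × n` block matrix
with `p × q` blocks: its entry in row `(i, j)` and column `(k, l)` is `A (i, k) (j, l)`. -/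
def blockVec {𝕜 : Type*} {m n p q : ℕ} (A : Matrix (Fin m × Fin p) (Fin n × Fin q) 𝕜) :
    Matrix (Fin m × Fin n) (Fin p × Fin q) 𝕜 :=
  Matrix.of fun r c => A (r.1, c.1) (r.2, c.2)

theorem Matrix.rank_pos_of_ne_zero {K m n : Type*} [Field K] [Fintype n] {A : Matrix m n K}
    (h : A ≠ 0) : 0 < A.rank := by
  have := Module.Finite.span_of_finite K (Set.finite_range A.col)
  rw [rank_eq_finrank_span_cols, Nat.pos_iff_ne_zero, Ne, Submodule.finrank_eq_zero,
    Submodule.span_eq_bot, Set.forall_mem_range]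
  contrapose! h
  ext i j
  exact congrFun (h j) i

theorem Matrix.rank_vecMulVec_eq_one {K m n : Type*} [Field K] [Fintype n] {w : m → K}
    {v : n → K} (hw : w ≠ 0) (hv : v ≠ 0) : (vecMulVec w v).rank = 1 := by
  refine (rank_vecMulVec_le w v).antisymm (rank_pos_of_ne_zero fun h => ?_)
  obtain ⟨i, hi⟩ := Function.ne_iff.mp hw
  obtain ⟨j, hj⟩ := Function.ne_iff.mp hv
  exact mul_ne_zero hi hj congr($h i j)

theorem blockVec_kronecker {α : Type*} [Mul α] {m n p q : ℕ} (B : Matrix (Fin m) (Fin n) α)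
    (C : Matrix (Fin p) (Fin q) α) : blockVec (B ⊗ₖ C) = vecMulVec (vec Bᵀ) (vec Cᵀ) :=
  rfl

theorem blockVec_isSymm_and_rank_one_of_kronecker_sq {𝕜 : Type*} [Field 𝕜] {m n : ℕ}
    (A : Matrix (Fin m × Fin m) (Fin n × Fin n) 𝕜) (hA : A ≠ 0)
    (B : Matrix (Fin m) (Fin n) 𝕜) (hAB : A = B ⊗ₖ B) :
    (blockVec A).IsSymm ∧ (blockVec A).rank = 1 := by
  subst hAB
  have hB : vec Bᵀ ≠ 0 := by
    rintro hB
    rw [vec_eq_zero_iff, transpose_eq_zero] at hB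
    simp [hB] at hA
  rw [blockVec_kronecker]
  exact ⟨transpose_vecMulVec _ _, rank_vecMulVec_eq_one hB hB⟩
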